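/- Let H be a finite group of odd order such that d(Z/2 × H) = 2. Then the nim-number of the achievement game GEN(Z/2 × H) is *0. -/

import Mathlib

universe u

namespace SetTheory

/-- Pre-games (removed from Mathlib; restored with the old definition). -/
inductive PGame : Type (u + 1)
  | mk : ∀ α β : Type u, (α → PGame) → (β → PGame) → PGame

namespace PGame

instance : Zero PGame :=
  ⟨⟨PEmpty, PEmpty, PEmpty.elim, PEmpty.elim⟩⟩

end PGame

end SetTheory

/-- Nimbers (removed from Mathlib; restored as a type synonym of `Ordinal`, as before). -/
def Nimber : Type (u + 1) :=
  Ordinal.{u}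

namespace Nimber

noncomputable instance : InfSet Nimber.{u} :=
  inferInstanceAs (InfSet Ordinal.{u})

end Nimber

/-- The identity map from ordinals to nimbers. -/
def Ordinal.toNimber : Ordinal.{u} → Nimber.{u} :=
  id

prefix:75 "∗" => Ordinal.toNimber

namespace SetTheory

namespace PGame

/-- The Grundy value: the minimum excluded value of the Grundy values of the left options. -/
noncomputable def grundyValue : PGame.{u} → Nimber.{u}
  | mk _ _ L _ => sInf (Set.range fun i => grundyValue (L i))ᶜ

end PGame

end SetTheory

open SetTheory Nimber
open scoped Classical

/-- The achievement game `GEN(G)` of Anderson and Harary: positions are (finite) subsets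
of the finite group `G`; a position that generates `G` is terminal, and otherwise the
options are obtained by selecting a previously-unselected element of `G`.  The game is
impartial, so the left and right options agree. -/
noncomputable def genGame {G : Type} [Group G] [Fintype G] (P : Finset G) : PGame :=
  if Subgroup.closure (P : Set G) = ⊤ then 0
  else
    PGame.mk {g : G // g ∉ P} {g : G // g ∉ P}
      (fun g => genGame (insert g.1 P)) (fun g => genGame (insert g.1 P))
termination_by Fintype.card G - P.card
decreasing_by
  all_goals
    have h1 : (insert g.1 P).card = P.card + 1 := Finset.card_insert_of_notMem g.2
    have h2 : (insert g.1 P).card ≤ Fintype.card G := Finset.card_le_univ _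
    omega

/-- The nim-number of the achievement game `GEN(G)`, i.e. the Sprague-Grundy value of the
starting position `∅`. -/
noncomputable def nimGEN (G : Type) [Group G] [Fintype G] : Nimber :=
  PGame.grundyValue (genGame (∅ : Finset G))

/-- `d(G)`: the minimal cardinality of a generating set of `G`. -/
noncomputable def minGen (G : Type) [Group G] : ℕ :=
  sInf {n : ℕ | ∃ S : Finset G, S.card = n ∧ Subgroup.closure (S : Set G) = ⊤}

/-!
The second player wins. Call a position `P ⊆ ℤ/2 × H` safe if `|P|` is even and no single
element of `H` completes the projection `K` of `⟨P⟩` to `H` to all of `H`. After the first player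
moves from a safe position, `K` is still proper. If now one element `h` completes `K`, the second
player answers `(1, h)` and wins: since `|H|` is odd, a subgroup of `ℤ/2 × H` splits as a product,
so it is everything once it projects onto `H` and has an element with nontrivial first coordinate.
Otherwise the second player answers without changing `K` and so keeps the position safe: with an
element of `⟨P⟩ \ P`, or, if `P` is a subgroup (hence of odd order), with the involution `(1, e)`.
-/

namespace SetTheory.PGame

theorem grundyValue_mk_eq_zero_iff {α β : Type u} {L : α → PGame.{u}} {R : β → PGame.{u}} :
    grundyValue (mk α β L R) = ∗0 ↔ ∀ i, grundyValue (L i) ≠ ∗0 := by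
  change @sInf Ordinal.{u} _ (Set.range fun i => grundyValue (L i))ᶜ = (0 : Ordinal) ↔
    ∀ i, grundyValue (L i) ≠ (0 : Ordinal)
  constructor
  · intro h i hi
    have hmem := csInf_mem (nonempty_of_not_bddAbove
      (Ordinal.not_bddAbove_compl_of_small _ (hs := small_range fun i => grundyValue (L i))))
    exact hmem ⟨i, hi.trans h.symm⟩
  · intro h
    exact nonpos_iff_eq_zero.1 (csInf_le' fun ⟨i, hi⟩ => h i hi)

theorem grundyValue_zero : grundyValue (0 : PGame.{u}) = ∗0 :=
  grundyValue_mk_eq_zero_iff.2 fun i => i.elim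

end SetTheory.PGame

open SetTheory.PGame

section GenGame

variable {G : Type} [Group G] [Fintype G]

theorem grundyValue_genGame_of_closure_eq_top {P : Finset G}
    (hP : Subgroup.closure (P : Set G) = ⊤) : grundyValue (genGame P) = ∗0 := by
  rw [genGame, if_pos hP, grundyValue_zero]

theorem grundyValue_genGame_eq_zero_iff [DecidableEq G] {P : Finset G}
    (hP : Subgroup.closure (P : Set G) ≠ ⊤) :
    grundyValue (genGame P) = ∗0 ↔ ∀ g ∉ P, grundyValue (genGame (insert g P)) ≠ ∗0 := by
  -- `genGame` inserts using classical decidable equality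
  obtain rfl := Subsingleton.elim ‹DecidableEq G› fun a b => Classical.propDecidable (a = b)
  rw [genGame, if_neg hP, grundyValue_mk_eq_zero_iff, Subtype.forall]

theorem grundyValue_genGame_eq_zero_of_strategy [DecidableEq G] (Safe : Finset G → Prop)
    (hreply : ∀ P, Safe P → ∀ g ∉ P, Subgroup.closure ((insert g P : Finset G) : Set G) ≠ ⊤ ∧
      ∃ r ∉ insert g P, Subgroup.closure ((insert r (insert g P) : Finset G) : Set G) = ⊤ ∨
        Safe (insert r (insert g P)))
    {P : Finset G} (hP : Safe P) : grundyValue (genGame P) = ∗0 := by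
  refine Finset.strongDownwardInduction (n := Fintype.card G)
    (p := fun P => Safe P → grundyValue (genGame P) = ∗0) (fun P ih _ hP => ?_)
    P (Finset.card_le_univ P) hP
  by_cases htop : Subgroup.closure (P : Set G) = ⊤
  · exact grundyValue_genGame_of_closure_eq_top htop
  refine (grundyValue_genGame_eq_zero_iff htop).2 fun g hg => ?_
  obtain ⟨hQ, r, hr, hR⟩ := hreply P hP g hg
  have hR0 : grundyValue (genGame (insert r (insert g P))) = ∗0 := by
    refine hR.elim grundyValue_genGame_of_closure_eq_top (ih (Finset.card_le_univ _) ?_)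
    exact (Finset.ssubset_insert hg).trans (Finset.ssubset_insert hr)
  exact fun h => (grundyValue_genGame_eq_zero_iff hQ).1 h r hr hR0

end GenGame

theorem minGen_le_card {G : Type} [Group G] (S : Finset G)
    (hS : Subgroup.closure (S : Set G) = ⊤) : minGen G ≤ S.card :=
  Nat.sInf_le ⟨S, rfl, hS⟩

theorem Finset.exists_mem_closure_notMem_of_odd_card {G : Type} [Group G] {S : Finset G}
    (hS : Odd S.card) {x : G} (hx : x ∈ S) (hx1 : x ≠ 1) (hx2 : x ^ 2 = 1) :
    ∃ r ∈ Subgroup.closure (S : Set G), r ∉ S := by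
  by_contra! hclosed
  have hcoe : (Subgroup.closure (S : Set G) : Set G) = S :=
    Set.Subset.antisymm hclosed Subgroup.subset_closure
  have hcard : Nat.card (Subgroup.closure (S : Set G)) = S.card := by
    rw [← SetLike.coe_sort_coe, hcoe, Nat.card_coe_set_eq, Set.ncard_coe_finset]
  have hdvd := (Subgroup.closure (S : Set G)).orderOf_dvd_natCard (Subgroup.subset_closure hx)
  rw [orderOf_eq_prime hx2 hx1, hcard] at hdvd
  exact hS.not_two_dvd_nat hdvd

def Subgroup.CompletableByOne {H : Type} [Group H] (K : Subgroup H) : Prop :=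
  ∃ h : H, K ⊔ Subgroup.closure {h} = ⊤

section Product

variable {A H : Type} [Group H]

def sndClosure (P : Finset (A × H)) : Subgroup H :=
  Subgroup.closure (Prod.snd '' (P : Set (A × H)))

theorem map_snd_closure [Group A] (P : Finset (A × H)) :
    (Subgroup.closure (P : Set (A × H))).map (MonoidHom.snd A H) = sndClosure P :=
  MonoidHom.map_closure _ _

theorem sndClosure_insert [DecidableEq (A × H)] (g : A × H) (P : Finset (A × H)) :
    sndClosure (insert g P) = Subgroup.closure {g.2} ⊔ sndClosure P := by
  rw [sndClosure, Finset.coe_insert, Set.image_insert_eq, Set.insert_eq, Subgroup.closure_union]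
  rfl

theorem sndClosure_insert_of_mem_closure [Group A] [DecidableEq (A × H)] {r : A × H}
    {P : Finset (A × H)} (hr : r ∈ Subgroup.closure (P : Set (A × H))) :
    sndClosure (insert r P) = sndClosure P := by
  rw [sndClosure_insert, sup_eq_right, Subgroup.closure_le, Set.singleton_subset_iff,
    ← map_snd_closure]
  exact Subgroup.mem_map_of_mem _ hr

end Product

section ZModTwoProd

variable {H : Type} [Group H]

local notation "τ" => Multiplicative.ofAdd (1 : ZMod 2)

theorem exists_notMem_sndClosure_insert_eq {Q : Finset (Multiplicative (ZMod 2) × H)}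
    (hQ : Odd Q.card) : ∃ r ∉ Q, sndClosure (insert r Q) = sndClosure Q := by
  by_cases hτ : (τ, 1) ∈ Q
  · obtain ⟨r, hrS, hrQ⟩ := Q.exists_mem_closure_notMem_of_odd_card hQ hτ
      (fun h => absurd (congrArg Prod.fst h) (show (τ : Multiplicative (ZMod 2)) ≠ 1 by decide))
      (Prod.ext (show (τ : Multiplicative (ZMod 2)) ^ 2 = 1 by decide) (one_pow 2))
    exact ⟨r, hrQ, sndClosure_insert_of_mem_closure hrS⟩
  · exact ⟨(τ, 1), hτ, by rw [sndClosure_insert, Subgroup.closure_singleton_one, bot_sup_eq]⟩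

variable [Fintype H]

theorem one_mk_mem_of_mk_mem (hH : Odd (Fintype.card H))
    {S : Subgroup (Multiplicative (ZMod 2) × H)} {a : Multiplicative (ZMod 2)} {h : H}
    (hm : (a, h) ∈ S) : (1, h) ∈ S := by
  obtain ⟨k, hk⟩ := hH.add_one
  have hpow : (a, h) ^ (Fintype.card H + 1) = (1, h) := by
    have ha : ∀ b : Multiplicative (ZMod 2), b ^ 2 = 1 := by decide
    ext
    · rw [Prod.pow_fst, hk, ← two_mul, pow_mul, ha a, one_pow]
    · rw [Prod.pow_snd, pow_succ, pow_card_eq_one, one_mul]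
  exact hpow ▸ pow_mem hm _

theorem mk_one_mem_of_mk_mem (hH : Odd (Fintype.card H))
    {S : Subgroup (Multiplicative (ZMod 2) × H)} {a : Multiplicative (ZMod 2)} {h : H}
    (hm : (a, h) ∈ S) : (a, 1) ∈ S := by
  have hdiv : (a, h) * (1, h)⁻¹ = (a, 1) := by ext <;> simp
  exact hdiv ▸ mul_mem hm (inv_mem (one_mk_mem_of_mk_mem hH hm))

theorem eq_top_of_map_snd_eq_top (hH : Odd (Fintype.card H))
    {S : Subgroup (Multiplicative (ZMod 2) × H)}
    (hS : S.map (MonoidHom.snd _ H) = ⊤) {h₀ : H} (hτ : (τ, h₀) ∈ S) : S = ⊤ := by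
  refine (Subgroup.eq_top_iff' S).2 fun ⟨a, h⟩ => ?_
  obtain ⟨⟨b, h⟩, hbh, rfl⟩ := Subgroup.mem_map.1 (hS ▸ Subgroup.mem_top h)
  have ha : (a, (1 : H)) ∈ S := by
    rcases show a = 1 ∨ a = τ by revert a; decide with rfl | rfl
    · exact S.one_mem
    · exact mk_one_mem_of_mk_mem hH hτ
  have hsplit : (a, (1 : H)) * (1, h) = (a, h) := by ext <;> simp
  exact hsplit ▸ mul_mem ha (one_mk_mem_of_mk_mem hH hbh)

theorem closure_insert_eq_top (hH : Odd (Fintype.card H))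
    {Q : Finset (Multiplicative (ZMod 2) × H)} {h : H}
    (hQ : sndClosure Q ⊔ Subgroup.closure {h} = ⊤) :
    Subgroup.closure ((insert (τ, h) Q : Finset _) : Set (Multiplicative (ZMod 2) × H)) = ⊤ := by
  refine eq_top_of_map_snd_eq_top hH ?_ (Subgroup.subset_closure (Q.mem_insert_self _))
  rw [map_snd_closure, sndClosure_insert, sup_comm]
  exact hQ

def SafePosition (P : Finset (Multiplicative (ZMod 2) × H)) : Prop :=
  Even P.card ∧ ¬(sndClosure P).CompletableByOne

theorem SafePosition.exists_reply (hH : Odd (Fintype.card H))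
    {P : Finset (Multiplicative (ZMod 2) × H)} (hP : SafePosition P)
    {g : Multiplicative (ZMod 2) × H} (hg : g ∉ P) :
    Subgroup.closure ((insert g P : Finset _) : Set (Multiplicative (ZMod 2) × H)) ≠ ⊤ ∧
      ∃ r ∉ insert g P, Subgroup.closure ((insert r (insert g P) : Finset _) :
        Set (Multiplicative (ZMod 2) × H)) = ⊤ ∨ SafePosition (insert r (insert g P)) := by
  have hQ : sndClosure (insert g P) ≠ ⊤ := by
    rw [sndClosure_insert, sup_comm]
    exact fun h => hP.2 ⟨g.2, h⟩
  refine ⟨fun h => hQ (by rw [← map_snd_closure, h, Subgroup.map_top_of_surjective _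
    Prod.snd_surjective]), ?_⟩
  by_cases hc : (sndClosure (insert g P)).CompletableByOne
  · obtain ⟨h, hh⟩ := hc
    refine ⟨(τ, h), fun hmem => hQ ?_, Or.inl (closure_insert_eq_top hH hh)⟩
    rwa [← sndClosure_insert_of_mem_closure (Subgroup.subset_closure hmem), sndClosure_insert,
      sup_comm]
  · have hodd : Odd (insert g P).card := by
      rw [Finset.card_insert_of_notMem hg]
      exact hP.1.add_one
    obtain ⟨r, hr, hrQ⟩ := exists_notMem_sndClosure_insert_eq hodd
    refine ⟨r, hr, Or.inr ⟨?_, hrQ ▸ hc⟩⟩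
    rw [Finset.card_insert_of_notMem hr]
    exact hodd.add_one

end ZModTwoProd

theorem nimGEN_Z2_times_odd (H : Type) [Group H] [Fintype H] (hH : Odd (Fintype.card H))
    (hd : minGen (Multiplicative (ZMod 2) × H) = 2) :
    nimGEN (Multiplicative (ZMod 2) × H) = ∗0 := by
  have hstart : SafePosition (∅ : Finset (Multiplicative (ZMod 2) × H)) := by
    refine ⟨Even.zero, fun ⟨h, hh⟩ => ?_⟩
    have hmin := minGen_le_card _ (closure_insert_eq_top hH hh)
    simp only [Finset.card_insert_of_notMem (Finset.notMem_empty _), Finset.card_empty] at hmin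
    omega
  exact grundyValue_genGame_eq_zero_of_strategy SafePosition
    (fun _ hP _ hg => hP.exists_reply hH hg) hstart
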